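/- arXiv:math/0610499 — 10 statements merged into one kernel-verified Lean document; each statement's English description precedes it below -/
import Mathlib

section
/- The alternating series ∑_{n=1}^∞ (−1)^{n-1}(1/n − log((n+1)/n)) converges to log(4/π). -/
open Filter Finset Real Topology

namespace Stmt2Aux

noncomputable def t (n : ℕ) : ℝ := 1 / (n + 1) - Real.log ((n + 2) / (n + 1))

lemma t_nonneg (n : ℕ) : 0 ≤ t n := by
  have h1 : (0:ℝ) < n + 1 := by positivity
  have h2 : (0:ℝ) < n + 2 := by positivity
  have h := Real.log_le_sub_one_of_pos (div_pos h2 h1)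
  have heq : ((n:ℝ) + 2) / (n + 1) - 1 = 1 / (n + 1) := by field_simp; norm_num
  simp only [t, sub_nonneg]
  linarith [heq ▸ h]

lemma t_le (n : ℕ) : t n ≤ 1 / ((n : ℝ) + 1) ^ 2 := by
  have h1 : (0:ℝ) < n + 1 := by positivity
  have h2 : (0:ℝ) < n + 2 := by positivity
  have hlog : Real.log (((n:ℝ) + 1) / (n + 2)) ≤ ((n:ℝ)+1)/(n+2) - 1 :=
    Real.log_le_sub_one_of_pos (div_pos h1 h2)
  have hinv : Real.log (((n:ℝ) + 2) / (n + 1)) = - Real.log (((n:ℝ)+1)/(n+2)) := by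
    rw [← Real.log_inv]
    congr 1
    field_simp
  have heq : ((n:ℝ)+1)/(n+2) - 1 = - (1 / (n+2)) := by field_simp; norm_num
  have hge : (1:ℝ) / (n + 2) ≤ Real.log (((n:ℝ) + 2) / (n + 1)) := by
    rw [hinv]; linarith [heq ▸ hlog]
  have hstep : t n ≤ 1 / ((n:ℝ)+1) - 1/((n:ℝ)+2) := by simp only [t]; linarith
  refine hstep.trans ?_
  have h3 : 1 / ((n:ℝ)+1) - 1/((n:ℝ)+2) = 1/(((n:ℝ)+1)*((n:ℝ)+2)) := by
    field_simp; ring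
  rw [h3]
  apply one_div_le_one_div_of_le (by positivity)
  nlinarith [sq_nonneg ((n:ℝ)+1)]

lemma summable_f :
    Summable (fun n : ℕ => (-1 : ℝ) ^ n * (1 / (n + 1) - Real.log ((n + 2) / (n + 1)))) := by
  have hs : Summable (fun n : ℕ => 1 / ((n : ℝ) + 1) ^ 2) := by
    have := (summable_nat_add_iff 1).2 (Real.summable_one_div_nat_pow.2 one_lt_two)
    simpa using this
  apply Summable.of_abs
  apply hs.of_nonneg_of_le (fun n => abs_nonneg _)
  intro n
  have : |(-1 : ℝ) ^ n * (1 / (n + 1) - Real.log ((n + 2) / (n + 1)))| = t n := by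
    have ht := t_nonneg n
    simp only [t] at ht ⊢
    rw [abs_mul, abs_pow, abs_neg, abs_one, one_pow, one_mul, abs_of_nonneg ht]
  rw [this]
  exact t_le n

lemma sum_range_two_mul (g : ℕ → ℝ) (N : ℕ) :
    ∑ n ∈ Finset.range (2 * N), g n = ∑ k ∈ Finset.range N, (g (2 * k) + g (2 * k + 1)) := by
  induction N with
  | zero => simp
  | succ N ih =>
    have h : 2 * (N + 1) = (2 * N + 1) + 1 := by ring
    rw [h, Finset.sum_range_succ, Finset.sum_range_succ, ih, Finset.sum_range_succ]
    ring

lemma harm_id (N : ℕ) :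
    ∑ k ∈ Finset.range N, (1 / (2 * (k:ℝ) + 1) - 1 / (2 * (k:ℝ) + 2))
      = (harmonic (2 * N) : ℝ) - (harmonic N : ℝ) := by
  induction N with
  | zero => simp
  | succ N ih =>
    rw [Finset.sum_range_succ, ih]
    have h : 2 * (N + 1) = (2 * N + 1) + 1 := by ring
    rw [h, harmonic_succ, harmonic_succ, harmonic_succ]
    push_cast
    have h1 : 2 * (N:ℝ) + 1 > 0 := by positivity
    have h2 : 2 * (N:ℝ) + 2 > 0 := by positivity
    have h3 : (N:ℝ) + 1 > 0 := by positivity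
    field_simp
    ring

lemma tendsto_two_mul : Tendsto (fun N : ℕ => 2 * N) atTop atTop :=
  tendsto_atTop_atTop_of_monotone (fun a b h => by omega) (fun b => ⟨b, by omega⟩)

lemma tendsto_A :
    Tendsto (fun N : ℕ => (harmonic (2 * N) : ℝ) - (harmonic N : ℝ)) atTop (𝓝 (Real.log 2)) := by
  have h1 : Tendsto (fun N : ℕ => ((harmonic (2*N) : ℝ) - Real.log (2*N)))
      atTop (𝓝 eulerMascheroniConstant) := by
    have h := Real.tendsto_harmonic_sub_log.comp tendsto_two_mul
    refine h.congr fun N => ?_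
    simp only [Function.comp_apply]
    push_cast
    ring_nf
  have h2 := Real.tendsto_harmonic_sub_log
  have h3 : Tendsto (fun N : ℕ => ((harmonic (2*N) : ℝ) - Real.log (2*N)) -
      ((harmonic N : ℝ) - Real.log N) + Real.log 2) atTop
      (𝓝 (eulerMascheroniConstant - eulerMascheroniConstant + Real.log 2)) :=
    (h1.sub h2).add tendsto_const_nhds
  rw [sub_self, zero_add] at h3
  apply h3.congr'
  filter_upwards [eventually_ne_atTop 0] with N hN
  have hN' : (N:ℝ) ≠ 0 := Nat.cast_ne_zero.2 hN
  have : Real.log (2 * (N:ℝ)) = Real.log 2 + Real.log N := Real.log_mul two_ne_zero hN'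
  push_cast [this]
  ring

lemma tendsto_B :
    Tendsto (fun N : ℕ => ∑ k ∈ Finset.range N,
      Real.log (((2:ℝ) * k + 2) / (2 * k + 1) * ((2 * k + 2) / (2 * k + 3))))
      atTop (𝓝 (Real.log (π / 2))) := by
  have hcont : ContinuousAt Real.log (π / 2) :=
    Real.continuousAt_log (by positivity)
  have h := hcont.tendsto.comp Real.tendsto_prod_pi_div_two
  apply h.congr
  intro N
  simp only [Function.comp]
  rw [Real.log_prod]
  intro k _
  have h1 : (0:ℝ) < 2 * k + 1 := by positivity
  have h2 : (0:ℝ) < 2 * k + 2 := by positivity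
  have h3 : (0:ℝ) < 2 * k + 3 := by positivity
  positivity

end Stmt2Aux

open Stmt2Aux Filter Finset Real in
/-- The alternating series `∑_{n=1}^∞ (−1)^{n-1}(1/n − log((n+1)/n))` converges to `log(4/π)`. -/
theorem stmt_2 :
    HasSum (fun n : ℕ => (-1 : ℝ) ^ n * (1 / (n + 1) - Real.log ((n + 2) / (n + 1))))
      (Real.log (4 / Real.pi)) := by
  set f : ℕ → ℝ := fun n : ℕ => (-1 : ℝ) ^ n * (1 / (n + 1) - Real.log ((n + 2) / (n + 1)))
    with hf
  have hsum : Summable f := summable_f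
  have h1 : Tendsto (fun N => ∑ n ∈ Finset.range N, f n) atTop (𝓝 (∑' n, f n)) :=
    hsum.hasSum.tendsto_sum_nat
  have h2 : Tendsto (fun N => ∑ n ∈ Finset.range (2 * N), f n) atTop (𝓝 (∑' n, f n)) :=
    h1.comp tendsto_two_mul
  -- compute the even partial sums
  have key : ∀ N : ℕ, ∑ n ∈ Finset.range (2 * N), f n
      = ((harmonic (2 * N) : ℝ) - (harmonic N : ℝ))
        - ∑ k ∈ Finset.range N,
            Real.log (((2:ℝ) * k + 2) / (2 * k + 1) * ((2 * k + 2) / (2 * k + 3))) := by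
    intro N
    rw [sum_range_two_mul f N, ← harm_id N, ← Finset.sum_sub_distrib]
    apply Finset.sum_congr rfl
    intro k _
    have h1 : (0:ℝ) < 2 * k + 1 := by positivity
    have h2 : (0:ℝ) < 2 * k + 2 := by positivity
    have h3 : (0:ℝ) < 2 * k + 3 := by positivity
    have he : ((-1:ℝ)) ^ (2 * k) = 1 := by
      rw [pow_mul]; norm_num
    have ho : ((-1:ℝ)) ^ (2 * k + 1) = -1 := by
      rw [pow_succ, he]; norm_num
    have hlog : Real.log (((2:ℝ) * k + 2) / (2 * k + 1) * ((2 * k + 2) / (2 * k + 3)))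
        = Real.log ((2 * (k:ℝ) + 2) / (2 * k + 1)) - Real.log ((2 * (k:ℝ) + 3) / (2 * k + 2)) := by
      rw [Real.log_mul (by positivity) (by positivity)]
      rw [Real.log_div (by positivity) (by positivity), Real.log_div (by positivity) (by positivity),
        Real.log_div (by positivity) (by positivity)]
      ring
    simp only [hf]
    push_cast
    rw [he, ho, hlog]
    have e1 : ((2:ℝ) * k) + 2 = (2 * (k:ℝ) + 1) + 1 := by ring
    have e2 : ((2:ℝ) * k + 1) + 2 = 2 * (k:ℝ) + 3 := by ring
    have e3 : ((2:ℝ) * k + 1) + 1 = 2 * (k:ℝ) + 2 := by ring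
    rw [e2, e3]
    ring_nf
  have h3 : Tendsto (fun N => ∑ n ∈ Finset.range (2 * N), f n) atTop
      (𝓝 (Real.log 2 - Real.log (π / 2))) := by
    have := tendsto_A.sub tendsto_B
    apply this.congr
    intro N
    exact (key N).symm
  have hval : Real.log 2 - Real.log (π / 2) = Real.log (4 / π) := by
    have hπ : (π : ℝ) ≠ 0 := Real.pi_ne_zero
    have h42 : (4:ℝ)/π = 2/(π/2) := by field_simp; ring
    rw [h42, Real.log_div two_ne_zero (div_ne_zero hπ two_ne_zero)]
  have : (∑' n, f n) = Real.log (4 / π) := by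
    rw [← hval]
    exact tendsto_nhds_unique h2 h3
  rw [← this]
  exact hsum.hasSum
end

section
/- For every complex z with |z| ≤ 1 and z ≠ 1, z²·γ(z) = z + (1−z)·log(1−z) − ∑_{k=2}^∞ (Li_k(z) − z)/k. -/
/-!
Write `Li_{k+2}(z) - z = ∑_{n ≥ 0} z^{n+2} / (n+2)^{k+2}`. The double series
`∑_{k,n} z^{n+2} / ((n+2)^{k+2} (k+2))` converges absolutely for `‖z‖ ≤ 1`, so it may be
summed in either order. Summing over `k` first, the logarithm series at `w = 1/(n+2)` gives
`z^{n+2} (log((n+2)/(n+1)) - 1/(n+2))`, which is `z^{n+2}/((n+1)(n+2)) - z^{n+2} γ_n`. Finally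
`∑ z^{n+2}/((n+1)(n+2)) = z + (1-z) log(1-z)`: inside the unit disc this follows from the
logarithm series, and it extends to the rest of the closed disc except `z = 1` because both
sides are continuous there (the left side converges uniformly).
-/

open Complex Metric

theorem HasSum.prod_fiberwise_snd {α β γ : Type*} [AddCommMonoid α] [TopologicalSpace α]
    [ContinuousAdd α] [RegularSpace α] {f : β × γ → α} {g : γ → α} {a : α} (ha : HasSum f a)
    (hf : ∀ c, HasSum (fun b => f (b, c)) (g c)) : HasSum g a :=
  ((Equiv.prodComm γ β).hasSum_iff.mpr ha).prod_fiberwise hf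

theorem Real.summable_one_div_natCast_add_one_sq :
    Summable (fun n : ℕ => 1 / ((n : ℝ) + 1) ^ 2) := by
  simpa using (summable_nat_add_iff 1).mpr (Real.summable_one_div_nat_pow.mpr one_lt_two)

namespace Complex

theorem hasSum_pow_div_add_two {w : ℂ} (hw : ‖w‖ < 1) :
    HasSum (fun n : ℕ => w ^ (n + 2) / ((n : ℂ) + 2)) (-log (1 - w) - w) := by
  simpa [Finset.sum_range_succ] using
    (hasSum_nat_add_iff' 2).mpr (hasSum_taylorSeries_neg_log hw)

theorem hasSum_pow_div_mul_of_norm_lt_one {w : ℂ} (hw : ‖w‖ < 1) :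
    HasSum (fun n : ℕ => w ^ (n + 2) / (((n : ℂ) + 1) * ((n : ℂ) + 2)))
      (w + (1 - w) * log (1 - w)) := by
  have h := ((hasSum_taylorSeries_neg_log' hw).mul_left w).sub (hasSum_pow_div_add_two hw)
  rw [show w * -log (1 - w) - (-log (1 - w) - w) = w + (1 - w) * log (1 - w) by ring] at h
  refine h.congr_fun fun n => ?_
  have : (n : ℂ) + 2 ≠ 0 := by norm_cast
  field_simp
  ring

theorem one_sub_mem_slitPlane {z : ℂ} (hz : ‖z‖ ≤ 1) (hz1 : z ≠ 1) :
    1 - z ∈ slitPlane := by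
  rw [mem_slitPlane_iff, sub_re, one_re, sub_pos, sub_im, one_im, zero_sub, neg_ne_zero]
  by_contra! h
  have hre : z.re = 1 := le_antisymm ((re_le_norm z).trans hz) h.1
  exact hz1 (ext hre h.2)

theorem norm_pow_div_le_one_div {z : ℂ} (hz : ‖z‖ ≤ 1) (m : ℕ) (d : ℂ) :
    ‖z ^ m / d‖ ≤ 1 / ‖d‖ := by
  rw [norm_div, norm_pow]
  gcongr
  exact pow_le_one₀ (norm_nonneg z) hz

theorem norm_pow_div_mul_le {w : ℂ} (hw : ‖w‖ ≤ 1) (n : ℕ) :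
    ‖w ^ (n + 2) / (((n : ℂ) + 1) * ((n : ℂ) + 2))‖ ≤ 1 / ((n : ℝ) + 1) ^ 2 := by
  refine (norm_pow_div_le_one_div hw _ _).trans ?_
  rw [norm_mul]
  norm_cast
  gcongr
  rw [sq]
  gcongr
  omega

theorem hasSum_pow_div_mul_of_norm_le_one {z : ℂ} (hz : ‖z‖ ≤ 1) (hz1 : z ≠ 1) :
    HasSum (fun n : ℕ => z ^ (n + 2) / (((n : ℂ) + 1) * ((n : ℂ) + 2)))
      (z + (1 - z) * log (1 - z)) := by
  have hsum : Summable (fun n : ℕ => z ^ (n + 2) / (((n : ℂ) + 1) * ((n : ℂ) + 2))) :=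
    .of_norm_bounded Real.summable_one_div_natCast_add_one_sq (norm_pow_div_mul_le hz)
  have hcont : ContinuousOn
      (fun w : ℂ => ∑' n : ℕ, w ^ (n + 2) / (((n : ℂ) + 1) * ((n : ℂ) + 2))) (closedBall 0 1) :=
    continuousOn_tsum (fun n => by fun_prop) Real.summable_one_div_natCast_add_one_sq
      fun n w hw => norm_pow_div_mul_le (mem_closedBall_zero_iff.mp hw) n
  have hcont' : ContinuousOn (fun w : ℂ => w + (1 - w) * log (1 - w)) (closedBall 0 1 \ {1}) :=
    fun w hw => by
      have := one_sub_mem_slitPlane (mem_closedBall_zero_iff.mp hw.1) hw.2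
      exact ContinuousAt.continuousWithinAt (by fun_prop (disch := assumption))
  have hball : ball (0 : ℂ) 1 ⊆ closedBall 0 1 \ {1} := fun w hw =>
    ⟨ball_subset_closedBall hw, by rintro rfl; simp at hw⟩
  have hclosure : closedBall (0 : ℂ) 1 \ {1} ⊆ closure (ball 0 1) := by
    rw [closure_ball _ one_ne_zero]
    exact Set.sdiff_subset
  have htsum := Set.EqOn.of_subset_closure
    (fun w hw => (hasSum_pow_div_mul_of_norm_lt_one (mem_ball_zero_iff.mp hw)).tsum_eq)
    (hcont.mono Set.sdiff_subset) hcont' hball hclosure ⟨mem_closedBall_zero_iff.mpr hz, hz1⟩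
  beta_reduce at htsum
  exact htsum ▸ hsum.hasSum

theorem hasSum_pow_div_add_two_pow {z : ℂ} (hz : ‖z‖ ≤ 1) (k : ℕ) :
    HasSum (fun n : ℕ => z ^ (n + 2) / ((n : ℂ) + 2) ^ (k + 2))
      ((∑' n : ℕ, z ^ (n + 1) / ((n : ℂ) + 1) ^ (k + 2)) - z) := by
  have hsum : Summable (fun n : ℕ => z ^ (n + 1) / ((n : ℂ) + 1) ^ (k + 2)) := by
    refine .of_norm_bounded Real.summable_one_div_natCast_add_one_sq fun n =>
      (norm_pow_div_le_one_div hz _ _).trans ?_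
    rw [norm_pow]
    norm_cast
    gcongr <;> omega
  simpa [add_assoc, one_add_one_eq_two] using (hasSum_nat_add_iff' 1).mpr hsum.hasSum

theorem summable_pow_div_pow_mul {z : ℂ} (hz : ‖z‖ ≤ 1) :
    Summable fun p : ℕ × ℕ =>
      z ^ (p.2 + 2) / (((p.2 : ℂ) + 2) ^ (p.1 + 2) * ((p.1 : ℂ) + 2)) := by
  have hbound := summable_geometric_two.mul_of_nonneg
    Real.summable_one_div_natCast_add_one_sq (fun _ => by positivity) fun _ => by positivity
  refine .of_norm_bounded hbound fun ⟨k, n⟩ => (norm_pow_div_le_one_div hz _ _).trans ?_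
  have hden : 2 ^ k * (n + 1) ^ 2 ≤ (n + 2) ^ (k + 2) * (k + 2) :=
    calc 2 ^ k * (n + 1) ^ 2 ≤ (n + 2) ^ k * (n + 2) ^ 2 := by gcongr <;> omega
      _ = (n + 2) ^ (k + 2) * 1 := by ring
      _ ≤ (n + 2) ^ (k + 2) * (k + 2) := by gcongr; omega
  calc 1 / ‖((n : ℂ) + 2) ^ (k + 2) * ((k : ℂ) + 2)‖
      = 1 / (((n + 2) ^ (k + 2) * (k + 2) : ℕ) : ℝ) := by push_cast; norm_cast
    _ ≤ 1 / ((2 ^ k * (n + 1) ^ 2 : ℕ) : ℝ) := by gcongr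
    _ = (1 / 2) ^ k * (1 / ((n : ℝ) + 1) ^ 2) := by
        push_cast
        rw [one_div_pow, one_div_mul_one_div]

theorem neg_log_one_sub_inv_natCast_add_two (n : ℕ) :
    -log (1 - ((n : ℂ) + 2)⁻¹) = (Real.log ((n + 2) / (n + 1)) : ℂ) := by
  have h : 1 - ((n : ℂ) + 2)⁻¹ = (((n + 2) / (n + 1) : ℝ)⁻¹ : ℝ) := by
    have : (n : ℂ) + 2 ≠ 0 := by norm_cast
    push_cast
    field_simp
    ring
  rw [h, ← ofReal_log (by positivity), Real.log_inv, ofReal_neg, neg_neg]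

theorem hasSum_pow_div_pow_mul_fst (z : ℂ) (n : ℕ) :
    HasSum (fun k : ℕ => z ^ (n + 2) / (((n : ℂ) + 2) ^ (k + 2) * ((k : ℂ) + 2)))
      (z ^ (n + 2) * ((Real.log ((n + 2) / (n + 1)) : ℂ) - 1 / ((n : ℂ) + 2))) := by
  have hw : ‖((n : ℂ) + 2)⁻¹‖ < 1 := by
    rw [norm_inv]
    exact inv_lt_one_of_one_lt₀ (by norm_cast; omega)
  have h := (hasSum_pow_div_add_two hw).mul_left (z ^ (n + 2))
  rw [neg_log_one_sub_inv_natCast_add_two, ← one_div] at h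
  exact h.congr_fun fun k => by rw [one_div_pow, div_div, mul_one_div]

end Complex

/-- For `|z| ≤ 1`, `z ≠ 1`:
`z²·γ(z) = z + (1−z)·log(1−z) − ∑_{k=2}^∞ (Li_k(z) − z)/k`. -/
theorem stmt_6 (z : ℂ) (hz : ‖z‖ ≤ 1) (hz1 : z ≠ 1) :
    HasSum (fun k : ℕ =>
        ((∑' n : ℕ, z ^ (n + 1) / (n + 1) ^ (k + 2)) - z) / (k + 2))
      (z + (1 - z) * Complex.log (1 - z)
        - z ^ 2 * ∑' n : ℕ,
            z ^ n * ((1 : ℂ) / (n + 1) - (Real.log ((n + 2) / (n + 1)) : ℂ))) := by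
  obtain ⟨S, hS⟩ := summable_pow_div_pow_mul hz
  have hγ : HasSum
      (fun n : ℕ => z ^ 2 * (z ^ n * ((1 : ℂ) / (n + 1) - (Real.log ((n + 2) / (n + 1)) : ℂ))))
      (z + (1 - z) * log (1 - z) - S) := by
    refine ((hasSum_pow_div_mul_of_norm_le_one hz hz1).sub
      (hS.prod_fiberwise_snd (hasSum_pow_div_pow_mul_fst z))).congr_fun fun n => ?_
    have : (n : ℂ) + 1 ≠ 0 := by norm_cast
    have : (n : ℂ) + 2 ≠ 0 := by norm_cast
    field_simp
    ring
  rw [← tsum_mul_left, hγ.tsum_eq, sub_sub_cancel]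
  exact hS.prod_fiberwise fun k => by
    simpa only [div_div] using (hasSum_pow_div_add_two_pow hz k).div_const ((k : ℂ) + 2)
end

section
/- log π = 1 + ∑_{k=2}^∞ (1 − (1 − 2^{1-k})ζ(k))/k. -/
/-!
Since `(1 - 2^{1-s}) ζ(s) = ∑_{n ≥ 1} (-1)^{n-1} / n^s`, the `k`-th term of the series is
`(1/k) ∑_{j ≥ 0} (-1)^j / (j+2)^k`. The double series `∑_{j,k} (-1)^j / (k (j+2)^k)` over `k ≥ 2`
converges absolutely, so it may also be summed over `k` first: with `x = 1/(j+2)`,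
`∑_k x^k / k = -log(1-x) - x`, leaving `∑_j (-1)^j (log((j+2)/(j+1)) - 1/(j+2))`. Its partial sums
up to `2K` are the logarithm of the `K`-th Wallis product minus `1 - (H_{2K} - H_K) - 1/(2K+1)`,
so it converges to `log(π/2) - (1 - log 2) = log π - 1`.
-/

open Real Filter Finset Topology

lemma hasSum_pow_add_two_div {x : ℝ} (hx : |x| < 1) :
    HasSum (fun k : ℕ => x ^ (k + 2) / (k + 2)) (-log (1 - x) - x) := by
  have h := (hasSum_nat_add_iff' 1).2 (hasSum_pow_div_log_of_abs_lt_one hx)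
  simp only [range_one, sum_singleton, zero_add, pow_one, CharP.cast_eq_zero, div_one] at h
  exact h.congr_fun fun k => by push_cast; ring

lemma summable_one_div_nat_add_pow (m : ℕ) {s : ℕ} (hs : 1 < s) :
    Summable fun n : ℕ => 1 / ((n : ℝ) + m) ^ s := by
  exact_mod_cast (summable_nat_add_iff m).2 (Real.summable_one_div_nat_pow.2 hs)

lemma hasSum_neg_one_pow_div_nat_add_one_pow {s : ℕ} (hs : 1 < s) :
    HasSum (fun n : ℕ => (-1) ^ n / ((n : ℝ) + 1) ^ s)
      ((1 - 2 ^ (1 - s : ℤ)) * ∑' n : ℕ, 1 / ((n : ℝ) + 1) ^ s) := by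
  set f : ℕ → ℝ := fun n => 1 / ((n : ℝ) + 1) ^ s
  have hf : Summable f := by simpa only [Nat.cast_one] using summable_one_div_nat_add_pow 1 hs
  have hodd : HasSum (fun m => f (2 * m + 1)) (2 ^ (-s : ℤ) * ∑' n, f n) := by
    refine (hf.hasSum.mul_left _).congr_fun fun m => ?_
    simp only [f, zpow_neg, zpow_natCast]
    push_cast
    rw [show (2 * (m : ℝ) + 1 + 1) = 2 * (m + 1) by ring, mul_pow]
    field_simp
  have heven : HasSum (fun m => f (2 * m)) ((1 - 2 ^ (-s : ℤ)) * ∑' n, f n) := by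
    have hfe : Summable fun m => f (2 * m) := hf.comp_injective (mul_right_injective₀ two_ne_zero)
    convert hfe.hasSum using 1
    linear_combination (tsum_even_add_odd hfe hodd.summable).symm + hodd.tsum_eq
  have halternating : HasSum (fun n => (-1) ^ n * f n)
      ((1 - 2 ^ (-s : ℤ)) * ∑' n, f n + -(2 ^ (-s : ℤ) * ∑' n, f n)) :=
    .even_add_odd (by simpa [pow_mul] using heven) (by simpa [pow_succ, pow_mul] using hodd.neg)
  convert halternating using 1
  · simp [f, div_eq_mul_inv]
  · rw [sub_eq_add_neg (1 : ℤ), zpow_add₀ two_ne_zero]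
    ring

lemma hasSum_neg_one_pow_div_nat_add_two_pow {s : ℕ} (hs : 1 < s) :
    HasSum (fun n : ℕ => (-1) ^ n / ((n : ℝ) + 2) ^ s)
      (1 - (1 - 2 ^ (1 - s : ℤ)) * ∑' n : ℕ, 1 / ((n : ℝ) + 1) ^ s) := by
  have h := ((hasSum_nat_add_iff' 1).2 (hasSum_neg_one_pow_div_nat_add_one_pow hs)).neg
  simp only [range_one, sum_singleton, pow_zero, CharP.cast_eq_zero, zero_add, one_pow,
    div_one, neg_sub] at h
  exact h.congr_fun fun n => by push_cast; ring

noncomputable def logPiDoubleTerm (p : ℕ × ℕ) : ℝ :=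
  (-1) ^ p.1 / ((p.1 : ℝ) + 2) ^ (p.2 + 2) / (p.2 + 2)

lemma summable_logPiDoubleTerm : Summable logPiDoubleTerm := by
  have hbound : ∀ p : ℕ × ℕ, ‖logPiDoubleTerm p‖ ≤ 1 / ((p.1 : ℝ) + 2) ^ 2 * (1 / 2) ^ p.2 := by
    rintro ⟨j, k⟩
    have hj : (2 : ℝ) ≤ j + 2 := by linarith [(j.cast_nonneg : (0 : ℝ) ≤ j)]
    have hk : (1 : ℝ) ≤ k + 2 := by linarith [(k.cast_nonneg : (0 : ℝ) ≤ k)]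
    calc ‖logPiDoubleTerm (j, k)‖ = 1 / ((j : ℝ) + 2) ^ (k + 2) / (k + 2) := by
          simp [logPiDoubleTerm, abs_of_pos (by positivity : (0 : ℝ) < j + 2),
            abs_of_pos (by positivity : (0 : ℝ) < k + 2)]
      _ ≤ 1 / ((j : ℝ) + 2) ^ (k + 2) := div_le_self (by positivity) hk
      _ = 1 / ((j : ℝ) + 2) ^ 2 * (1 / (j + 2)) ^ k := by rw [div_pow, one_pow]; field_simp; ring
      _ ≤ 1 / ((j : ℝ) + 2) ^ 2 * (1 / 2) ^ k := by gcongr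
  refine .of_norm_bounded ((summable_one_div_nat_add_pow 2 one_lt_two).mul_of_nonneg
    summable_geometric_two (fun _ => by positivity) (fun _ => by positivity)) ?_
  exact_mod_cast hbound

lemma hasSum_logPiDoubleTerm_column (k : ℕ) :
    HasSum (fun j => logPiDoubleTerm (j, k))
      ((1 - (1 - 2 ^ (-(k + 1) : ℤ)) * ∑' n : ℕ, (1 : ℝ) / (n + 1) ^ (k + 2)) / (k + 2)) := by
  have hexp : (1 - (k + 2 : ℕ) : ℤ) = -(k + 1) := by push_cast; ring
  have h := (hasSum_neg_one_pow_div_nat_add_two_pow (s := k + 2) (by omega)).div_const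
    ((k : ℝ) + 2)
  rwa [hexp] at h

lemma hasSum_logPiDoubleTerm_row (j : ℕ) :
    HasSum (fun k => logPiDoubleTerm (j, k))
      ((-1) ^ j * (log (((j : ℝ) + 2) / (j + 1)) - 1 / (j + 2))) := by
  have hx : |1 / ((j : ℝ) + 2)| < 1 := by
    rw [abs_of_pos (by positivity), div_lt_one (by positivity)]
    linarith [(j.cast_nonneg : (0 : ℝ) ≤ j)]
  have h := (hasSum_pow_add_two_div hx).mul_left ((-1) ^ j)
  have hlog : -log (1 - 1 / ((j : ℝ) + 2)) = log (((j : ℝ) + 2) / (j + 1)) := by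
    have : 1 - 1 / ((j : ℝ) + 2) = (j + 1) / (j + 2) := by field_simp; ring
    rw [this, ← log_inv, inv_div]
  rw [hlog] at h
  exact h.congr_fun fun k => by simp only [logPiDoubleTerm, div_pow, one_pow]; ring

lemma sum_range_two_mul {M : Type*} [AddCommMonoid M] (f : ℕ → M) (K : ℕ) :
    ∑ j ∈ range (2 * K), f j = ∑ i ∈ range K, (f (2 * i) + f (2 * i + 1)) := by
  induction K with
  | zero => simp
  | succ K ih => rw [mul_add, mul_one, sum_range_succ, sum_range_succ, sum_range_succ, ih, add_assoc]

lemma tendsto_sum_range_two_mul_neg_one_pow_mul_log :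
    Tendsto (fun K : ℕ => ∑ j ∈ range (2 * K), (-1) ^ j * log (((j : ℝ) + 2) / (j + 1)))
      atTop (𝓝 (log (π / 2))) := by
  refine (tendsto_prod_pi_div_two.log (by positivity)).congr fun K => ?_
  rw [sum_range_two_mul, log_prod fun i _ => by positivity]
  refine sum_congr rfl fun i _ => ?_
  rw [log_mul (by positivity) (by positivity), ← neg_neg (log ((2 * (i : ℝ) + 2) / (2 * i + 3))),
    ← log_inv, inv_div, pow_succ, pow_mul]
  push_cast
  ring_nf

lemma sum_range_two_mul_neg_one_pow_div (K : ℕ) :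
    ∑ j ∈ range (2 * K), (-1) ^ j / ((j : ℝ) + 2)
      = 1 - (harmonic (2 * K) - harmonic K) - 1 / (2 * K + 1) := by
  induction K with
  | zero => simp
  | succ K ih =>
    rw [sum_range_two_mul] at ih ⊢
    rw [sum_range_succ, ih, show 2 * (K + 1) = 2 * K + 1 + 1 by ring, harmonic_succ,
      harmonic_succ, harmonic_succ, pow_succ, pow_mul]
    push_cast
    field_simp
    ring

lemma tendsto_sum_range_two_mul_neg_one_pow_div :
    Tendsto (fun K : ℕ => ∑ j ∈ range (2 * K), (-1) ^ j / ((j : ℝ) + 2)) atTop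
      (𝓝 (1 - log 2)) := by
  have h2K : Tendsto (fun K : ℕ => 2 * K) atTop atTop :=
    (strictMono_mul_left_of_pos two_pos).tendsto_atTop
  have hH : Tendsto (fun K : ℕ => (harmonic (2 * K) : ℝ) - harmonic K) atTop (𝓝 (log 2)) := by
    have h := ((tendsto_harmonic_sub_log.comp h2K).sub tendsto_harmonic_sub_log).add_const (log 2)
    rw [sub_self, zero_add] at h
    refine h.congr' ?_
    filter_upwards [eventually_ne_atTop 0] with K hK
    simp only [Function.comp, Nat.cast_mul, Nat.cast_ofNat]
    rw [log_mul two_ne_zero (Nat.cast_ne_zero.2 hK)]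
    ring
  have hinv : Tendsto (fun K : ℕ => 1 / (2 * (K : ℝ) + 1)) atTop (𝓝 0) := by
    simpa [Function.comp_def] using (tendsto_one_div_add_atTop_nhds_zero_nat (𝕜 := ℝ)).comp h2K
  simpa [sum_range_two_mul_neg_one_pow_div] using
    ((tendsto_const_nhds (x := (1 : ℝ))).sub hH).sub hinv

lemma tendsto_sum_range_two_mul_neg_one_pow_mul_log_sub :
    Tendsto (fun K : ℕ => ∑ j ∈ range (2 * K),
      (-1) ^ j * (log (((j : ℝ) + 2) / (j + 1)) - 1 / (j + 2))) atTop (𝓝 (log π - 1)) := by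
  have h := tendsto_sum_range_two_mul_neg_one_pow_mul_log.sub
    tendsto_sum_range_two_mul_neg_one_pow_div
  rw [log_div pi_ne_zero two_ne_zero, sub_sub_sub_cancel_right] at h
  refine h.congr fun K => ?_
  rw [← sum_sub_distrib]
  exact sum_congr rfl fun j _ => by ring

/-- `log π = 1 + ∑_{k=2}^∞ (1 − (1 − 2^{1−k})ζ(k))/k`. -/
theorem stmt_7 :
    HasSum (fun k : ℕ =>
        (1 - (1 - 2 ^ (-(k + 1) : ℤ)) * ∑' n : ℕ, (1 : ℝ) / (n + 1) ^ (k + 2)) / (k + 2))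
      (Real.log Real.pi - 1) := by
  have hrows : HasSum (fun j : ℕ => (-1) ^ j * (log (((j : ℝ) + 2) / (j + 1)) - 1 / (j + 2)))
      (∑' p, logPiDoubleTerm p) :=
    summable_logPiDoubleTerm.hasSum.prod_fiberwise hasSum_logPiDoubleTerm_row
  have hvalue : ∑' p, logPiDoubleTerm p = log π - 1 :=
    tendsto_nhds_unique
      (hrows.tendsto_sum_nat.comp (strictMono_mul_left_of_pos two_pos).tendsto_atTop)
      tendsto_sum_range_two_mul_neg_one_pow_mul_log_sub
  have hswap := (Equiv.prodComm ℕ ℕ).hasSum_iff.2 (hvalue ▸ summable_logPiDoubleTerm.hasSum)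
  exact hswap.prod_fiberwise hasSum_logPiDoubleTerm_column
end

section
/- log(4/π) = γ − 2∑_{k=2}^∞ (−1)^k ζ(k)/(2^k k), where γ is Euler's constant. -/
/-!
Expanding `x - log (1 + x) = ∑_{k ≥ 2} (-x)^k / k` at `x = 1 / (2n + 2)` and summing over `n`
(the double series converges absolutely) identifies the series `S` on the right with
`∑_n (1 / (2n + 2) - log (1 + 1 / (2n + 2)))`. Twice its `N`-th partial sum is
`H_N - 2 log P_N`, where `H_N` is the harmonic number and `P_N = ∏_{i<N} (2i + 3) / (2i + 2)`.
Wallis' product gives `P_N² / N → 4 / π`, so subtracting `log N` and letting `N → ∞` yields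
`γ - 2S = log (4 / π)`.
-/

open Filter Topology Finset Real

lemma hasSum_neg_pow_div_sub_log_one_add {x : ℝ} (hx : |x| < 1) :
    HasSum (fun k : ℕ => (-x) ^ (k + 2) / (k + 2)) (x - log (1 + x)) := by
  have h := (hasSum_nat_add_iff' 1).2 (hasSum_pow_div_log_of_abs_lt_one (x := -x) (by rwa [abs_neg]))
  have hval : -log (1 - -x) - ∑ i ∈ range 1, (-x) ^ (i + 1) / ((i : ℝ) + 1) = x - log (1 + x) := by
    simp only [sub_neg_eq_add, range_one, sum_singleton, zero_add, pow_one, CharP.cast_eq_zero,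
      div_one]
    ring
  rw [hval] at h
  exact h.congr_fun fun k => by push_cast; ring

lemma abs_neg_pow_div_le {x : ℝ} (hx : |x| ≤ 1 / 2) (k : ℕ) :
    |(-x) ^ (k + 2) / (k + 2)| ≤ (1 / 2) ^ k * x ^ 2 := by
  rw [abs_div, abs_pow, abs_neg, abs_of_pos (by positivity : (0 : ℝ) < k + 2)]
  calc |x| ^ (k + 2) / (k + 2) ≤ |x| ^ (k + 2) :=
        div_le_self (by positivity) (by linarith [(k.cast_nonneg : (0 : ℝ) ≤ k)])
    _ = |x| ^ k * x ^ 2 := by rw [pow_add, sq_abs]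
    _ ≤ (1 / 2) ^ k * x ^ 2 := by gcongr

section DoubleSeries

variable {x : ℕ → ℝ} (hx : ∀ n, |x n| ≤ 1 / 2) (hx2 : Summable fun n => x n ^ 2)
include hx hx2

lemma summable_uncurry_neg_pow_div :
    Summable (Function.uncurry fun (k n : ℕ) => (-x n) ^ (k + 2) / (k + 2 : ℝ)) :=
  .of_norm_bounded (summable_geometric_two.mul_of_nonneg hx2 (fun _ => by positivity)
    (fun _ => sq_nonneg _)) fun p => abs_neg_pow_div_le (hx p.2) p.1

lemma summable_sub_log_one_add : Summable fun n => x n - log (1 + x n) := by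
  refine (summable_uncurry_neg_pow_div hx hx2).prod_symm.prod.congr fun n => ?_
  exact (hasSum_neg_pow_div_sub_log_one_add (by linarith [hx n])).tsum_eq

lemma hasSum_tsum_neg_pow_div :
    HasSum (fun k : ℕ => ∑' n, (-x n) ^ (k + 2) / (k + 2))
      (∑' n, (x n - log (1 + x n))) := by
  have hS := summable_uncurry_neg_pow_div hx hx2
  rw [tsum_congr fun n => (hasSum_neg_pow_div_sub_log_one_add (by linarith [hx n])).tsum_eq.symm,
    hS.tsum_comm]
  exact hS.prod.hasSum

end DoubleSeries

lemma wallis_mul_prod_one_add_sq (N : ℕ) :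
    (∏ i ∈ range N, ((2 : ℝ) * i + 2) / (2 * i + 1) * ((2 * i + 2) / (2 * i + 3))) *
      (∏ i ∈ range N, (1 + 1 / (2 * ((i : ℝ) + 1)))) ^ 2 = 2 * N + 1 := by
  induction N with
  | zero => simp
  | succ n ih =>
    rw [prod_range_succ, prod_range_succ, mul_pow, mul_mul_mul_comm, ih]
    push_cast
    field_simp
    ring

lemma tendsto_prod_one_add_sq_div :
    Tendsto (fun N : ℕ => (∏ i ∈ range N, (1 + 1 / (2 * ((i : ℝ) + 1)))) ^ 2 / N)
      atTop (𝓝 (4 / π)) := by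
  have hq : Tendsto (fun N : ℕ => (2 : ℝ) + 1 / N) atTop (𝓝 2) := by
    simpa using tendsto_one_div_atTop_nhds_zero_nat.const_add (2 : ℝ)
  have hlim : (2 : ℝ) / (π / 2) = 4 / π := by field_simp; norm_num
  rw [← hlim]
  refine (hq.div tendsto_prod_pi_div_two (by positivity)).congr' ?_
  filter_upwards [eventually_ne_atTop 0] with N hN
  have hW : (0 : ℝ) < ∏ i ∈ range N, ((2 : ℝ) * i + 2) / (2 * i + 1) * ((2 * i + 2) / (2 * i + 3)) :=
    prod_pos fun i _ => by positivity
  have hN' : (N : ℝ) ≠ 0 := by exact_mod_cast hN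
  rw [Pi.div_apply, div_eq_div_iff hW.ne' hN', mul_comm _ (∏ i ∈ range N, _),
    wallis_mul_prod_one_add_sq N]
  field_simp

lemma tendsto_two_mul_log_prod_one_add_sub_log :
    Tendsto (fun N : ℕ => 2 * log (∏ i ∈ range N, (1 + 1 / (2 * ((i : ℝ) + 1)))) - log N)
      atTop (𝓝 (log (4 / π))) := by
  refine ((continuousAt_log (by positivity)).tendsto.comp tendsto_prod_one_add_sq_div).congr' ?_
  filter_upwards [eventually_ne_atTop 0] with N hN
  have hP : ∏ i ∈ range N, (1 + 1 / (2 * ((i : ℝ) + 1))) ≠ 0 :=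
    prod_ne_zero_iff.2 fun i _ => by positivity
  rw [Function.comp_apply, log_div (by positivity) (by exact_mod_cast hN), log_pow]
  push_cast
  ring

lemma sum_range_one_div_succ_sub_log (N : ℕ) :
    (∑ j ∈ range N, (1 : ℝ) / (j + 1)) - log N =
      2 * ∑ n ∈ range N, (1 / (2 * ((n : ℝ) + 1)) - log (1 + 1 / (2 * ((n : ℝ) + 1)))) +
        (2 * log (∏ i ∈ range N, (1 + 1 / (2 * ((i : ℝ) + 1)))) - log N) := by
  rw [log_prod fun i _ => by positivity, sum_sub_distrib, mul_sub, mul_sum]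
  have : ∀ n ∈ range N, 2 * (1 / (2 * ((n : ℝ) + 1))) = 1 / (n + 1) := fun n _ => by
    field_simp
  rw [sum_congr rfl this]
  ring

lemma tsum_neg_one_div_two_mul_succ_pow_div (k : ℕ) :
    ∑' n : ℕ, (-(1 / (2 * ((n : ℝ) + 1)))) ^ (k + 2) / (k + 2) =
      (-1 : ℝ) ^ (k + 2) * (∑' n : ℕ, (1 : ℝ) / (n + 1) ^ (k + 2)) / (2 ^ (k + 2) * (k + 2)) := by
  rw [mul_div_right_comm, ← tsum_mul_left]
  refine tsum_congr fun n => ?_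
  rw [neg_pow, div_pow, mul_pow, one_pow]
  field_simp

lemma abs_one_div_two_mul_succ_le (n : ℕ) : |1 / (2 * ((n : ℝ) + 1))| ≤ 1 / 2 := by
  rw [abs_of_pos (by positivity), div_le_div_iff₀ (by positivity) (by norm_num)]
  linarith [(n.cast_nonneg : (0 : ℝ) ≤ n)]

lemma summable_one_div_two_mul_succ_sq :
    Summable fun n : ℕ => (1 / (2 * ((n : ℝ) + 1))) ^ 2 := by
  refine (((summable_nat_add_iff 1).2 (summable_one_div_nat_pow.2 one_lt_two)).div_const 4).congr
    fun n => ?_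
  push_cast
  field_simp
  ring

/-- `log(4/π) = γ − 2∑_{k=2}^∞ (−1)^k ζ(k)/(2^k k)`. -/
theorem stmt_8 (γ : ℝ)
    (hγ : Tendsto (fun n : ℕ => (∑ j ∈ Finset.range n, (1 : ℝ) / (j + 1)) - Real.log n)
      atTop (𝓝 γ)) :
    Summable (fun k : ℕ =>
        (-1 : ℝ) ^ (k + 2) * (∑' n : ℕ, (1 : ℝ) / (n + 1) ^ (k + 2)) / (2 ^ (k + 2) * (k + 2)))
    ∧ Real.log (4 / Real.pi)
      = γ - 2 * ∑' k : ℕ,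
          (-1 : ℝ) ^ (k + 2) * (∑' n : ℕ, (1 : ℝ) / (n + 1) ^ (k + 2))
            / (2 ^ (k + 2) * (k + 2)) := by
  have hx : ∀ n : ℕ, |1 / (2 * ((n : ℝ) + 1))| ≤ 1 / 2 := abs_one_div_two_mul_succ_le
  have hsum := hasSum_tsum_neg_pow_div hx summable_one_div_two_mul_succ_sq
  simp only [tsum_neg_one_div_two_mul_succ_pow_div] at hsum
  refine ⟨hsum.summable, ?_⟩
  have hlim := ((summable_sub_log_one_add hx summable_one_div_two_mul_succ_sq).hasSum
    |>.tendsto_sum_nat.const_mul 2).add tendsto_two_mul_log_prod_one_add_sub_log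
  simp only [← sum_range_one_div_succ_sub_log] at hlim
  rw [hsum.tsum_eq, tendsto_nhds_unique hγ hlim]
  ring
end

section
/- The left-hand difference quotient of γ at 1 along the real axis diverges to +∞: lim_{t→1⁻} (γ(1) − γ(t))/(1 − t) = +∞, where γ(z) = ∑_{n=1}^∞ z^{n-1}(1/n − log((n+1)/n)). -/
/-!
The coefficients `aₙ = 1/(n+1) - log (1 + 1/(n+1))` satisfy `1/(9(n+1)²) ≤ aₙ ≤ 1/(n+1)²`.
The difference quotient equals `∑ aₙ (1 + t + ⋯ + tⁿ⁻¹)`, a series of nonnegative terms whose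
partial sums are continuous in `t` with value `∑_{n<N} n aₙ` at `t = 1`; these values are unbounded
because `∑ n aₙ` diverges like the harmonic series.
-/

open Filter Topology Finset

section Abelian

variable {a : ℕ → ℝ}

theorem sum_range_mul_geom_sum_le_tsum_sub_div (ha0 : ∀ n, 0 ≤ a n) (ha : Summable a) {t : ℝ}
    (ht0 : 0 ≤ t) (ht1 : t < 1) (N : ℕ) :
    ∑ n ∈ range N, a n * ∑ k ∈ range n, t ^ k ≤ (∑' n, a n - ∑' n, t ^ n * a n) / (1 - t) := by
  have hpow (n : ℕ) : t ^ n ≤ 1 := pow_le_one₀ ht0 ht1.le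
  have hta : Summable fun n => t ^ n * a n :=
    ha.of_nonneg_of_le (fun n => mul_nonneg (pow_nonneg ht0 n) (ha0 n))
      (fun n => mul_le_of_le_one_left (ha0 n) (hpow n))
  rw [le_div_iff₀ (sub_pos.2 ht1), ← ha.tsum_sub hta, sum_mul]
  calc ∑ n ∈ range N, a n * (∑ k ∈ range n, t ^ k) * (1 - t)
      = ∑ n ∈ range N, (a n - t ^ n * a n) := by
        refine sum_congr rfl fun n _ => ?_
        rw [mul_assoc, geom_sum_mul_neg]
        ring
    _ ≤ ∑' n, (a n - t ^ n * a n) :=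
        (ha.sub hta).sum_le_tsum _ fun n _ => by nlinarith [ha0 n, hpow n]

theorem tendsto_tsum_sub_tsum_pow_mul_div_atTop (ha0 : ∀ n, 0 ≤ a n) (ha : Summable a)
    (hna : ¬Summable fun n : ℕ => (n : ℝ) * a n) :
    Tendsto (fun t => (∑' n, a n - ∑' n, t ^ n * a n) / (1 - t)) (𝓝[<] 1) atTop := by
  have hS : Tendsto (fun N => ∑ n ∈ range N, (n : ℝ) * a n) atTop atTop :=
    (not_summable_iff_tendsto_nat_atTop_of_nonneg fun n => mul_nonneg n.cast_nonneg (ha0 n)).1 hna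
  refine tendsto_atTop.2 fun b => ?_
  obtain ⟨N, hN⟩ := (hS.eventually_gt_atTop b).exists
  set g : ℝ → ℝ := fun t => ∑ n ∈ range N, a n * ∑ k ∈ range n, t ^ k
  have hg1 : g 1 = ∑ n ∈ range N, (n : ℝ) * a n := by simp [g, mul_comm]
  have hg : ∀ᶠ t in 𝓝 1, b < g t :=
    (by fun_prop : Continuous g).continuousAt.eventually_const_lt (hg1 ▸ hN)
  filter_upwards [Ioo_mem_nhdsLT zero_lt_one, nhdsWithin_le_nhds hg] with t ⟨ht0, ht1⟩ hbt
  exact hbt.le.trans (sum_range_mul_geom_sum_le_tsum_sub_div ha0 ha ht0.le ht1 N)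

end Abelian

section LogBounds

open Real

theorem sub_log_one_add_le_sq {x : ℝ} (hx : 0 ≤ x) : x - log (1 + x) ≤ x ^ 2 := by
  have hlog := one_sub_inv_le_log_of_pos (by linarith : 0 < 1 + x)
  have : 1 - (1 + x)⁻¹ = x - x ^ 2 / (1 + x) := by field_simp; ring
  have : x ^ 2 / (1 + x) ≤ x ^ 2 := div_le_self (sq_nonneg x) (by linarith)
  linarith

/-- With `s = √(1 + x)`, `log (1 + x) = 2 log s ≤ 2 (s - 1)` gives `x - log (1 + x) ≥ (s - 1)²`,
and `x = (s - 1)(s + 1)` with `s + 1 ≤ 3`. -/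
theorem sq_div_nine_le_sub_log_one_add {x : ℝ} (h0 : -1 < x) (h3 : x ≤ 3) :
    x ^ 2 / 9 ≤ x - log (1 + x) := by
  obtain ⟨hs0, hs2⟩ : 0 < √(1 + x) ∧ √(1 + x) ^ 2 = 1 + x :=
    ⟨sqrt_pos.2 (by linarith), sq_sqrt (by linarith)⟩
  set s := √(1 + x)
  have hlog : log (1 + x) ≤ 2 * (s - 1) := by
    rw [← hs2, log_pow]
    push_cast
    linarith [log_le_sub_one_of_pos hs0]
  have hs : s ≤ 2 := by nlinarith
  nlinarith [mul_nonneg (sq_nonneg (s - 1)) (sub_nonneg.2 hs),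
    mul_nonneg (sq_nonneg (s - 1)) hs0.le]

end LogBounds

noncomputable def eulerConstCoeff (n : ℕ) : ℝ :=
  1 / (n + 1) - Real.log ((n + 2) / (n + 1))

theorem eulerConstCoeff_eq_sub_log_one_add (n : ℕ) :
    eulerConstCoeff n = 1 / (n + 1) - Real.log (1 + 1 / (n + 1)) := by
  rw [eulerConstCoeff, one_add_div (by positivity)]
  ring_nf

theorem eulerConstCoeff_le (n : ℕ) : eulerConstCoeff n ≤ 1 / ((n : ℝ) + 1) ^ 2 := by
  rw [eulerConstCoeff_eq_sub_log_one_add, ← one_div_pow]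
  exact sub_log_one_add_le_sq (by positivity)

theorem le_eulerConstCoeff (n : ℕ) : 1 / (9 * ((n : ℝ) + 1) ^ 2) ≤ eulerConstCoeff n := by
  have hx0 : 0 < 1 / ((n : ℝ) + 1) := by positivity
  have hx1 : 1 / ((n : ℝ) + 1) ≤ 1 := div_le_one_of_le₀ (by simp) (by positivity)
  have h := sq_div_nine_le_sub_log_one_add (by linarith) (hx1.trans (by norm_num))
  rw [eulerConstCoeff_eq_sub_log_one_add]
  convert h using 1
  field_simp

theorem eulerConstCoeff_nonneg (n : ℕ) : 0 ≤ eulerConstCoeff n :=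
  (by positivity : (0 : ℝ) ≤ 1 / (9 * ((n : ℝ) + 1) ^ 2)).trans (le_eulerConstCoeff n)

theorem summable_eulerConstCoeff : Summable eulerConstCoeff := by
  refine .of_nonneg_of_le eulerConstCoeff_nonneg eulerConstCoeff_le ?_
  exact_mod_cast (summable_nat_add_iff 1).2 (Real.summable_one_div_nat_pow.2 one_lt_two)

theorem not_summable_nat_mul_eulerConstCoeff :
    ¬Summable fun n : ℕ => (n : ℝ) * eulerConstCoeff n := by
  intro h
  have hsucc : Summable fun n : ℕ => ((n : ℝ) + 1) * eulerConstCoeff n := by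
    simpa [add_mul] using h.add summable_eulerConstCoeff
  have : Summable fun n : ℕ => 1 / ((n + 1 : ℕ) : ℝ) := by
    refine (hsucc.mul_left 9).of_nonneg_of_le (fun n => by positivity) fun n => ?_
    calc 1 / ((n + 1 : ℕ) : ℝ) = 9 * ((n + 1) * (1 / (9 * ((n : ℝ) + 1) ^ 2))) := by
          push_cast
          field_simp
      _ ≤ 9 * ((n + 1) * eulerConstCoeff n) := by gcongr; exact le_eulerConstCoeff n
  exact Real.not_summable_one_div_natCast ((summable_nat_add_iff 1).1 this)

/-- `lim_{t→1⁻} (γ(1) − γ(t))/(1 − t) = +∞`. -/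
theorem stmt_10 :
    Tendsto
      (fun t : ℝ =>
        ((∑' n : ℕ, (1 : ℝ) ^ n * (1 / (n + 1) - Real.log ((n + 2) / (n + 1))))
          - ∑' n : ℕ, t ^ n * (1 / (n + 1) - Real.log ((n + 2) / (n + 1)))) / (1 - t))
      (nhdsWithin 1 (Set.Iio 1)) atTop := by
  simpa [eulerConstCoeff] using tendsto_tsum_sub_tsum_pow_mul_div_atTop eulerConstCoeff_nonneg
    summable_eulerConstCoeff not_summable_nat_mul_eulerConstCoeff
end

section
/- For every complex z with |z| < 1, z·γ(z) = −log(1−z) − (1−z)·∑_{n=1}^∞ z^{n-1} log n, where γ(z) = ∑_{n=1}^∞ z^{n-1}(1/n − log((n+1)/n)). -/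
/-!
Write `L(z) = ∑ zⁿ log (n + 1)` and split `log ((n + 2) / (n + 1)) = log (n + 2) - log (n + 1)`.
Then `z · ∑ zⁿ log (n + 2)` is `L(z)` shifted by one index (the dropped term is `log 1 = 0`), while
`z · ∑ zⁿ / (n + 1)` is the Taylor series of `-log (1 - z)`.
Hence `z γ(z) = -log (1 - z) - (L(z) - z L(z))`.
-/

theorem summable_pow_mul_of_norm_le_add {R : Type*} [NormedRing R] [NormOneClass R] [CompleteSpace R]
    {z : R} (hz : ‖z‖ < 1) {a : ℕ → R} (c : ℝ) (ha : ∀ n, ‖a n‖ ≤ n + c) :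
    Summable fun n ↦ z ^ n * a n := by
  have hz' : ‖‖z‖‖ < 1 := by rwa [norm_norm]
  have hmajorant : Summable fun n : ℕ ↦ ((n : ℝ) + c) * ‖z‖ ^ n := by
    simpa [add_mul] using (summable_pow_mul_geometric_of_norm_lt_one 1 hz').add
      ((summable_geometric_of_norm_lt_one hz').mul_left c)
  refine Summable.of_norm_bounded hmajorant fun n ↦ ?_
  calc ‖z ^ n * a n‖ ≤ ‖z‖ ^ n * ‖a n‖ := (norm_mul_le _ _).trans
        (mul_le_mul_of_nonneg_right (norm_pow_le z n) (norm_nonneg _))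
    _ ≤ ‖z‖ ^ n * (n + c) := mul_le_mul_of_nonneg_left (ha n) (by positivity)
    _ = (n + c) * ‖z‖ ^ n := mul_comm _ _

theorem Real.abs_log_natCast_le (m : ℕ) : |Real.log m| ≤ m := by
  rw [abs_of_nonneg (Real.log_natCast_nonneg m)]
  exact Real.log_le_self m.cast_nonneg

theorem summable_pow_mul_log_add_natCast {z : ℂ} (hz : ‖z‖ < 1) (c : ℕ) :
    Summable fun n : ℕ ↦ z ^ n * (Real.log (n + c) : ℂ) :=
  summable_pow_mul_of_norm_le_add hz c fun n ↦ by
    simpa [Complex.norm_real] using Real.abs_log_natCast_le (n + c)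

theorem mul_tsum_pow_mul_succ {K : Type*} [Field K] [TopologicalSpace K] [IsTopologicalRing K]
    [T2Space K] (z : K) {a : ℕ → K} (ha : Summable fun n ↦ z ^ n * a n) :
    z * ∑' n, z ^ n * a (n + 1) = ∑' n, z ^ n * a n - a 0 := by
  rw [ha.tsum_eq_zero_add, ← tsum_mul_left]
  simp only [pow_zero, one_mul, pow_succ', mul_assoc, add_sub_cancel_left]

/-- For `|z| < 1`: `z·γ(z) = −log(1−z) − (1−z)·∑_{n=1}^∞ z^{n-1} log n`. -/
theorem stmt_11 (z : ℂ) (hz : ‖z‖ < 1) :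
    z * (∑' n : ℕ, z ^ n * ((1 : ℂ) / (n + 1) - (Real.log ((n + 2) / (n + 1)) : ℂ)))
      = -Complex.log (1 - z) - (1 - z) * ∑' n : ℕ, z ^ n * (Real.log (n + 1) : ℂ) := by
  have hS1 : Summable fun n : ℕ ↦ z ^ n * (Real.log (n + 1) : ℂ) := by
    simpa using summable_pow_mul_log_add_natCast hz 1
  have hS2 : Summable fun n : ℕ ↦ z ^ n * (Real.log (n + 2) : ℂ) := by
    simpa using summable_pow_mul_log_add_natCast hz 2
  have hSinv : Summable fun n : ℕ ↦ z ^ n * ((1 : ℂ) / (n + 1)) :=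
    summable_pow_mul_of_norm_le_add hz 1 fun n ↦ by
      rw [norm_div, norm_one]
      norm_cast
      exact (div_le_one_of_le₀ (by simp) (by positivity)).trans (by simp)
  have hsplit (n : ℕ) : z ^ n * ((1 : ℂ) / (n + 1) - (Real.log ((n + 2) / (n + 1)) : ℂ))
      = z ^ n * ((1 : ℂ) / (n + 1))
        - (z ^ n * (Real.log (n + 2) : ℂ) - z ^ n * (Real.log (n + 1) : ℂ)) := by
    rw [Real.log_div (by positivity) (by positivity)]
    push_cast
    ring
  have hlog : z * ∑' n : ℕ, z ^ n * ((1 : ℂ) / (n + 1)) = -Complex.log (1 - z) := by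
    rw [← tsum_mul_left, ← (Complex.hasSum_taylorSeries_neg_log' hz).tsum_eq]
    exact tsum_congr fun n ↦ by ring
  have hshift : z * ∑' n : ℕ, z ^ n * (Real.log (n + 2) : ℂ)
      = ∑' n : ℕ, z ^ n * (Real.log (n + 1) : ℂ) := by
    simpa [add_assoc, one_add_one_eq_two] using
      mul_tsum_pow_mul_succ z (a := fun n : ℕ ↦ (Real.log (n + 1) : ℂ)) hS1
  rw [tsum_congr hsplit, hSinv.tsum_sub (hS2.sub hS1), hS2.tsum_sub hS1, mul_sub, mul_sub, hlog,
    hshift]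
  ring
end

section
/- For real t > 1, t·log(t/((t−1)·σ_t^{t−1})) = γ(1/t), where σ_t = ∏_{n=1}^∞ n^{1/t^n} is the generalized Somos constant and γ(z) = ∑_{n=1}^∞ z^{n-1}(1/n − log((n+1)/n)). -/
/-!
Write `x = 1/t`. The series for `γ(x)` splits into `∑ xⁿ/(n+1) = -log(1 - x)/x` and the
telescoping-type series `∑ xⁿ (log(n+2) - log(n+1))`, which an index shift expresses through
`log σ = ∑ log(n+1) x^{n+1}`; the identity is then an equality of logarithms.
-/

open Real

theorem hasSum_one_div_pow_mul_sub {𝕜 : Type*} [Field 𝕜] [TopologicalSpace 𝕜]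
    [IsTopologicalRing 𝕜] {f : ℕ → 𝕜} {t S : 𝕜} (ht : t ≠ 0)
    (hf : HasSum (fun n ↦ f n / t ^ (n + 1)) S) :
    HasSum (fun n ↦ (1 / t) ^ n * (f (n + 1) - f n)) (t * ((t - 1) * S - f 0)) := by
  have hpow : HasSum (fun n ↦ (1 / t) ^ n * f n) (t * S) :=
    (hf.mul_left t).congr_fun fun n ↦ by
      simp only [one_div, inv_pow, pow_succ]
      field_simp
  have hshift : HasSum (fun n ↦ (1 / t) ^ n * f (n + 1)) (t * (t * S - f 0)) := by
    have h := ((hasSum_nat_add_iff' 1).mpr hpow).mul_left t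
    rw [Finset.sum_range_one, pow_zero, one_mul] at h
    exact h.congr_fun fun n ↦ by
      simp only [one_div, inv_pow, pow_succ]
      field_simp
  have hdiff := hshift.sub hpow
  rw [show t * (t * S - f 0) - t * S = t * ((t - 1) * S - f 0) by ring] at hdiff
  exact hdiff.congr_fun fun n ↦ by ring

theorem Real.hasSum_one_div_pow_div_succ {t : ℝ} (ht : 1 < |t|) :
    HasSum (fun n : ℕ ↦ (1 / t) ^ n / (n + 1)) (t * log (t / (t - 1))) := by
  have ht0 : t ≠ 0 := by
    rintro rfl
    norm_num at ht
  have hx : |1 / t| < 1 := by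
    rw [abs_div, abs_one]
    exact (div_lt_one (by linarith)).mpr ht
  have h := (hasSum_pow_div_log_of_abs_lt_one hx).mul_left t
  rw [← log_inv, inv_eq_one_div, one_sub_div ht0, one_div_div] at h
  exact h.congr_fun fun n ↦ by
    rw [pow_succ]
    field_simp

/-- For `t > 1`: `t·log(t/((t−1)·σ_t^{t−1})) = γ(1/t)`, where `σ_t = ∏ n^{1/t^n}`. -/
theorem stmt_12 (t σ : ℝ) (ht : 1 < t) (hσpos : 0 < σ)
    (hσ : HasSum (fun n : ℕ => Real.log (n + 1) / t ^ (n + 1)) (Real.log σ)) :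
    t * Real.log (t / ((t - 1) * σ ^ (t - 1)))
      = ∑' n : ℕ, (1 / t) ^ n * (1 / (n + 1) - Real.log ((n + 2) / (n + 1))) := by
  have ht0 : t ≠ 0 := by positivity
  have ht1 : t - 1 ≠ 0 := by linarith
  have hγ := (Real.hasSum_one_div_pow_div_succ (ht.trans_le (le_abs_self t))).sub
    (hasSum_one_div_pow_mul_sub ht0 hσ)
  have hsummand : ∀ n : ℕ, (1 / t) ^ n * (1 / (n + 1) - Real.log ((n + 2) / (n + 1)))
      = (1 / t) ^ n / (n + 1) - (1 / t) ^ n * (Real.log ((n + 1 : ℕ) + 1) - Real.log (n + 1)) := by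
    intro n
    rw [Real.log_div (by positivity) (by positivity)]
    push_cast
    ring_nf
  rw [(hγ.congr_fun hsummand).tsum_eq, Real.log_div ht0 (by positivity),
    Real.log_mul ht1 (by positivity), Real.log_rpow hσpos, Real.log_div ht0 ht1]
  simp only [CharP.cast_eq_zero, zero_add, Real.log_one]
  ring
end

section
/- γ(1/2) = 2·log(2/σ), where σ = ∏_{n=1}^∞ n^{1/2^n} is Somos's quadratic recurrence constant and γ(z) = ∑_{n=1}^∞ z^{n-1}(1/n − log((n+1)/n)). -/
/-!
Split `1/n - log((n+1)/n)` and sum the two halves separately. The first is the Mercator series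
`∑ xⁿ/(n+1) = -log(1-x)/x`, which gives `2 log 2` at `x = 1/2`. The second telescopes against a
shift of the series defining `log σ`: since `log 1 = 0`, weighting `log(n+2) - log(n+1)` by `xⁿ`
gives `(1-x)/x²` times that series, i.e. `2 log σ` at `x = 1/2`.
-/

open Real

theorem hasSum_pow_mul_one_div_succ {x : ℝ} (hx₀ : x ≠ 0) (hx : |x| < 1) :
    HasSum (fun n : ℕ => x ^ n * (1 / (n + 1))) (-log (1 - x) / x) := by
  refine ((hasSum_pow_div_log_of_abs_lt_one hx).div_const x).congr_fun fun n => ?_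
  field_simp
  ring

theorem hasSum_pow_mul_sub_of_map_zero {𝕜 : Type*} [Field 𝕜] [TopologicalSpace 𝕜]
    [IsTopologicalRing 𝕜] {f : ℕ → 𝕜} {x L : 𝕜} (hx : x ≠ 0) (hf₀ : f 0 = 0)
    (h : HasSum (fun n => x ^ (n + 1) * f n) L) :
    HasSum (fun n => x ^ n * (f (n + 1) - f n)) ((1 - x) * L / x ^ 2) := by
  have hshift : HasSum (fun n => x ^ (n + 2) * f (n + 1)) L := by
    simpa [hf₀] using (hasSum_nat_add_iff' 1).mpr h
  have hvalue : (1 - x) * L / x ^ 2 = L / x ^ 2 - L / x := by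
    field_simp
  rw [hvalue]
  refine ((hshift.div_const (x ^ 2)).sub (h.div_const x)).congr_fun fun n => ?_
  field_simp
  ring

/-- `γ(1/2) = 2·log(2/σ)`, where `σ` is Somos's quadratic recurrence constant. -/
theorem stmt_13 (σ : ℝ) (hσpos : 0 < σ)
    (hσ : HasSum (fun n : ℕ => Real.log (n + 1) / 2 ^ (n + 1)) (Real.log σ)) :
    (∑' n : ℕ, (1 / 2 : ℝ) ^ n * (1 / (n + 1) - Real.log ((n + 2) / (n + 1))))
      = 2 * Real.log (2 / σ) := by
  have hlog : HasSum (fun n : ℕ => (1 / 2 : ℝ) ^ (n + 1) * log (n + 1)) (log σ) := by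
    simpa [div_eq_inv_mul] using hσ
  have hratio := hasSum_pow_mul_sub_of_map_zero (by norm_num) (by simp) hlog
  have hmercator := hasSum_pow_mul_one_div_succ (x := 1 / 2) (by norm_num)
    (by norm_num [abs_of_pos])
  convert (hmercator.sub hratio).tsum_eq using 1
  · congr 1
    funext n
    push_cast
    rw [log_div (by positivity) (by positivity)]
    ring_nf
  · rw [log_div two_ne_zero hσpos.ne', show (1 - 1 / 2 : ℝ) = 2⁻¹ by norm_num, log_inv]
    ring
end

section
/- Fix t > 1 and define g_0 = 1 and g_n = n·g_{n-1}^t for n ≥ 1. Then for all n ≥ 0, g_n = σ_t^{t^n} · ∏_{m=1}^∞ (m+n)^{−1/t^m}, where σ_t = ∏_{m=1}^∞ m^{1/t^m}. -/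
/-- For fixed `t > 1`, the generalized Somos sequence `g_0 = 1`, `g_n = n·g_{n-1}^t`
satisfies `g_n = σ_t^{t^n} · ∏_{m=1}^∞ (m+n)^{−1/t^m}`, the product being interpreted
through its (convergent) logarithmic series. -/
theorem stmt_14 (t σ : ℝ) (ht : 1 < t) (hσpos : 0 < σ)
    (hσ : HasSum (fun m : ℕ => Real.log (m + 1) / t ^ (m + 1)) (Real.log σ))
    (g : ℕ → ℝ) (hg0 : g 0 = 1)
    (hg : ∀ n : ℕ, 1 ≤ n → g n = n * g (n - 1) ^ t) :
    ∀ n : ℕ, g n = σ ^ (t ^ n)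
      * Real.exp (-∑' m : ℕ, Real.log ((m + 1 : ℕ) + n) / t ^ (m + 1)) := by
  have ht0 : 0 < t := lt_trans one_pos ht
  have htne : t ≠ 0 := ht0.ne'
  -- summability for every n
  have hsum : ∀ n : ℕ, Summable (fun m : ℕ => Real.log ((m + 1 : ℕ) + (n : ℝ)) / t ^ (m + 1)) := by
    intro n
    have h1 : Summable (fun m : ℕ => Real.log (m + 1) / t ^ (m + 1)) := hσ.summable
    have hgeo : Summable (fun m : ℕ => (1 / t) ^ m) := by
      apply summable_geometric_of_lt_one (by positivity)
      rw [div_lt_one ht0]; exact ht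
    have h2 : Summable (fun m : ℕ => Real.log ((n : ℝ) + 1) / t ^ (m + 1)) := by
      refine (hgeo.mul_left (Real.log ((n : ℝ) + 1) / t)).congr fun m => ?_
      rw [div_pow, one_pow, div_mul_div_comm, mul_one, ← pow_succ']
    refine Summable.of_nonneg_of_le (fun m => ?_) (fun m => ?_) (h1.add h2)
    · apply div_nonneg _ (by positivity)
      apply Real.log_nonneg
      have hm : (0:ℝ) ≤ (m:ℝ) := Nat.cast_nonneg m
      have hn : (0:ℝ) ≤ (n:ℝ) := Nat.cast_nonneg n
      push_cast; linarith
    · have hm : (0:ℝ) ≤ (m:ℝ) := Nat.cast_nonneg m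
      have hn : (0:ℝ) ≤ (n:ℝ) := Nat.cast_nonneg n
      rw [← add_div]
      gcongr
      rw [← Real.log_mul (by positivity) (by positivity)]
      apply Real.log_le_log (by push_cast; linarith)
      push_cast; nlinarith
  -- key telescoping identity
  have key : ∀ n : ℕ, t * ∑' m : ℕ, Real.log ((m + 1 : ℕ) + (n : ℝ)) / t ^ (m + 1)
      = Real.log ((n : ℝ) + 1)
        + ∑' m : ℕ, Real.log ((m + 1 : ℕ) + ((n : ℕ) + 1 : ℝ)) / t ^ (m + 1) := by
    intro n
    rw [← tsum_mul_left]
    have hcong : ∀ m : ℕ, t * (Real.log ((m + 1 : ℕ) + (n : ℝ)) / t ^ (m + 1))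
        = Real.log ((m + 1 : ℕ) + (n : ℝ)) / t ^ m := by
      intro m; rw [pow_succ]; field_simp
    rw [tsum_congr hcong]
    have hsum' : Summable (fun m : ℕ => Real.log ((m + 1 : ℕ) + (n : ℝ)) / t ^ m) :=
      ((hsum n).mul_left t).congr hcong
    rw [Summable.tsum_eq_zero_add hsum']
    congr 1
    · push_cast; rw [pow_zero, div_one, add_comm]
    · apply tsum_congr; intro m
      congr 2
      push_cast; ring
  -- main induction
  intro n
  induction n with
  | zero =>
    have h0 : (∑' m : ℕ, Real.log ((m + 1 : ℕ) + ((0:ℕ) : ℝ)) / t ^ (m + 1)) = Real.log σ := by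
      rw [← hσ.tsum_eq]
      apply tsum_congr; intro m
      congr 2
      push_cast; ring
    rw [hg0, h0, pow_zero, Real.rpow_one, Real.exp_neg, Real.exp_log hσpos,
      mul_inv_cancel₀ hσpos.ne']
  | succ n ih =>
    have hrec := hg (n + 1) (by omega)
    simp only [Nat.add_sub_cancel] at hrec
    have hn1 : (0:ℝ) < (n:ℝ) + 1 := by positivity
    have h2 : (-(∑' m : ℕ, Real.log ((m + 1 : ℕ) + (n : ℝ)) / t ^ (m + 1))) * t
        = -Real.log ((n : ℝ) + 1)
          + -(∑' m : ℕ, Real.log ((m + 1 : ℕ) + ((n:ℕ) + 1 : ℝ)) / t ^ (m + 1)) := by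
      rw [neg_mul, mul_comm, key n]; ring
    have hcast : (∑' m : ℕ, Real.log ((m + 1 : ℕ) + ((n:ℕ) + 1 : ℝ)) / t ^ (m + 1))
        = ∑' m : ℕ, Real.log ((m + 1 : ℕ) + ((n + 1 : ℕ) : ℝ)) / t ^ (m + 1) := by
      apply tsum_congr; intro m; congr 2; push_cast; ring
    rw [hrec, ih, Real.mul_rpow (by positivity) (by positivity),
      ← Real.rpow_mul hσpos.le, ← Real.exp_mul, h2, hcast, pow_succ,
      Real.exp_add, Real.exp_neg, Real.exp_log hn1]
    push_cast
    have hne : ((n:ℝ) + 1) ≠ 0 := hn1.ne'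
    field_simp
end

section
/- lim_{n→∞} (1^1·2^2·⋯·n^n) / (n^{n²/2 + n/2 + 1/12} · e^{−n²/4}) exists and is a positive real number (the Glaisher–Kinkelin constant A). -/
open Filter Topology Real

noncomputable def GKL : ℕ → ℝ := fun n =>
  (∑ k ∈ Finset.range n, ((k : ℝ) + 1) * Real.log ((k : ℝ) + 1))
    - ((n : ℝ) ^ 2 / 2 + (n : ℝ) / 2 + 1 / 12) * Real.log n + (n : ℝ) ^ 2 / 4

set_option maxHeartbeats 1000000 in
lemma GKL_diff_bound {n : ℕ} (hn : 2 ≤ n) : |GKL (n + 1) - GKL n| ≤ 3 / (n : ℝ) ^ 2 := by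
  have hN : (2 : ℝ) ≤ (n : ℝ) := by exact_mod_cast hn
  set N : ℝ := (n : ℝ) with hNdef
  have hN0 : 0 < N := by linarith
  have hlog : Real.log (N + 1) = Real.log N + Real.log (1 + 1/N) := by
    have h1 : (1 : ℝ) + 1/N = (N + 1) / N := by field_simp
    rw [h1, Real.log_div (by linarith) (ne_of_gt hN0)]; ring
  have hE := Real.abs_log_sub_add_sum_range_le (x := -(1/N)) (by
    rw [abs_neg, abs_of_pos (by positivity)]
    rw [div_lt_one hN0]; linarith) 3
  have hsum : (∑ i ∈ Finset.range 3, (-(1/N)) ^ (i+1) / (i+1))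
      = -(1/N) + 1/(2*N^2) - 1/(3*N^3) := by
    simp [Finset.sum_range_succ]
    field_simp
    ring
  rw [hsum] at hE
  have h1x : (1 : ℝ) - (-(1/N)) = 1 + 1/N := by ring
  rw [h1x] at hE
  set e : ℝ := Real.log (1 + 1/N) - (1/N - 1/(2*N^2) + 1/(3*N^3)) with he_def
  have hinv : 1/N ≤ 1/2 := by
    rw [div_le_div_iff₀ hN0 (by norm_num)]; linarith
  have habs : |e| ≤ 2 / N^4 := by
    have h2 : |(-(1/N))| = 1/N := by rw [abs_neg, abs_of_pos (by positivity)]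
    rw [h2] at hE
    have h3 : |(-(1/N) + 1/(2*N^2) - 1/(3*N^3)) + Real.log (1 + 1/N)| = |e| := by
      rw [he_def]; congr 1; ring
    rw [h3] at hE
    refine hE.trans ?_
    have hstep : (1/N) ^ (3+1) / (1 - 1/N) ≤ (1/N)^4 / (2⁻¹ : ℝ) := by
      gcongr
      linarith
    refine hstep.trans ?_
    have : (1/N)^4 / (2⁻¹ : ℝ) = 2/N^4 := by
      field_simp
    rw [this]
  have expand : GKL (n + 1) - GKL n
      = (2*N + 1)/4 - ((N^2 + N)/2 + 1/12) * Real.log (1 + 1/N) := by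
    simp only [GKL, Finset.sum_range_succ]
    push_cast
    rw [hlog]
    ring
  have hlog2 : Real.log (1 + 1/N) = (1/N - 1/(2*N^2) + 1/(3*N^3)) + e := by
    rw [he_def]; ring
  rw [expand, hlog2]
  have hpoly : (2*N + 1)/4 - ((N^2 + N)/2 + 1/12) * ((1/N - 1/(2*N^2) + 1/(3*N^3)) + e)
      = -(1/(8*N^2)) - 1/(36*N^3) - ((N^2 + N)/2 + 1/12) * e := by
    field_simp
    ring
  rw [hpoly]
  have hA : (0 : ℝ) < (N^2 + N)/2 + 1/12 := by positivity
  have hA2 : (N^2 + N)/2 + 1/12 ≤ N^2 := by nlinarith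
  have h4 : |((N^2 + N)/2 + 1/12) * e| ≤ N^2 * (2/N^4) := by
    rw [abs_mul, abs_of_pos hA]
    exact mul_le_mul hA2 habs (abs_nonneg e) (by positivity)
  have h5 : N^2 * (2/N^4) = 2/N^2 := by field_simp
  rw [h5] at h4
  have h6 := abs_le.mp h4
  rw [abs_le]
  have hb1 : 1/(8*N^2) ≤ 1/(2*N^2) := by
    apply one_div_le_one_div_of_le (by positivity)
    nlinarith
  have hb2 : 1/(36*N^3) ≤ 1/(2*N^2) := by
    apply one_div_le_one_div_of_le (by positivity)
    nlinarith
  have hb0 : 0 < 1/(8*N^2) := by positivity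
  have hb0' : 0 < 1/(36*N^3) := by positivity
  have heq : 1/(2*N^2) + 1/(2*N^2) + 2/N^2 = 3/N^2 := by ring
  exact ⟨by linarith [h6.1, h6.2], by linarith [h6.1, h6.2]⟩

lemma GKL_summable : Summable (fun n => GKL (n + 1) - GKL n) := by
  rw [← summable_nat_add_iff 2]
  apply Summable.of_abs
  apply Summable.of_nonneg_of_le (fun n => abs_nonneg _)
    (fun n => GKL_diff_bound (n := n + 2) (by omega))
  have h : Summable (fun n : ℕ => 3 * (1 / (n : ℝ) ^ 2)) :=
    (summable_one_div_nat_pow.mpr one_lt_two).mul_left 3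
  have := (summable_nat_add_iff 2).mpr h
  refine this.congr fun n => ?_
  push_cast
  ring

lemma GKL_tendsto : ∃ l : ℝ, Tendsto GKL atTop (𝓝 l) := by
  have h := GKL_summable.hasSum.tendsto_sum_nat
  refine ⟨GKL 0 + ∑' n, (GKL (n + 1) - GKL n), ?_⟩
  have h2 : Tendsto (fun n => GKL 0 + ∑ i ∈ Finset.range n, (GKL (i + 1) - GKL i))
      atTop (𝓝 (GKL 0 + ∑' n, (GKL (n + 1) - GKL n))) := tendsto_const_nhds.add h
  refine h2.congr fun n => ?_
  rw [Finset.sum_range_sub]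
  ring


/-- The Glaisher–Kinkelin limit `lim_n (∏_{k=1}^n k^k)/(n^{n²/2+n/2+1/12} e^{−n²/4})`
exists and is a positive real. -/
theorem stmt_18 :
    ∃ A : ℝ, 0 < A ∧
      Tendsto
        (fun n : ℕ =>
          (∏ k ∈ Finset.range n, ((k : ℝ) + 1) ^ (k + 1))
            / ((n : ℝ) ^ ((n : ℝ) ^ 2 / 2 + (n : ℝ) / 2 + 1 / 12)
              * Real.exp (-(n : ℝ) ^ 2 / 4)))
        atTop (𝓝 A) := by
  obtain ⟨l, hl⟩ := GKL_tendsto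
  refine ⟨Real.exp l, Real.exp_pos l, ?_⟩
  have h : Tendsto (fun n => Real.exp (GKL n)) atTop (𝓝 (Real.exp l)) :=
    (Real.continuous_exp.continuousAt.tendsto).comp hl
  refine h.congr' ?_
  filter_upwards [eventually_ge_atTop 1] with n hn
  have hN0 : (0 : ℝ) < (n : ℝ) := by exact_mod_cast Nat.lt_of_lt_of_le Nat.zero_lt_one hn
  have hnum : (∏ k ∈ Finset.range n, ((k : ℝ) + 1) ^ (k + 1))
      = Real.exp (∑ k ∈ Finset.range n, ((k : ℝ) + 1) * Real.log ((k : ℝ) + 1)) := by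
    rw [Real.exp_sum]
    refine Finset.prod_congr rfl fun k _ => ?_
    have hk : ((k : ℝ) + 1) = ((k + 1 : ℕ) : ℝ) := by push_cast; ring
    rw [hk, Real.exp_nat_mul, Real.exp_log (by positivity)]
  have hden : (n : ℝ) ^ ((n : ℝ) ^ 2 / 2 + (n : ℝ) / 2 + 1 / 12)
        * Real.exp (-(n : ℝ) ^ 2 / 4)
      = Real.exp (((n : ℝ) ^ 2 / 2 + (n : ℝ) / 2 + 1 / 12) * Real.log n
          + (-(n : ℝ) ^ 2 / 4)) := by
    rw [Real.rpow_def_of_pos hN0, Real.exp_add]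
    ring_nf
  rw [hnum, hden, ← Real.exp_sub]
  simp only [GKL]
  congr 1
  ring
end
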